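/- Fix μ ∈ ℂ and γ₁, γ₂, γ₃ ∈ ℂ. Define σ₁(t) = γ₁·exp(−μt), σ₂(t) = (γ₂ + (μt/3)·γ₁⁴)·exp(−4μt), and σ₃(t) = (γ₃ − μt·γ₁·γ₂² + ((19μt/24) − (μ²t²/3))·γ₁⁵·γ₂ + ((11μt/81) + (19μ²t²/144) − (μ³t³/27))·γ₁⁹)·exp(−9μt). Then (σ₁, σ₂, σ₃) solves the system σ₁' = −μσ₁, σ₂' = μ(−4σ₂ + (1/3)σ₁⁴), σ₃' = μ(−9σ₃ − σ₁σ₂² + (19/24)σ₁⁵σ₂ + (11/81)σ₁⁹), with initial data (γ₁, γ₂, γ₃) at t = 0. -/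

import Mathlib

/-!
Writing `E = exp (-μ t)`, each `σₖ` is a polynomial `pₖ(t)` times `E ^ k²`, so
`σₖ' = (pₖ' - k² μ pₖ) E ^ k²`. Since the nonlinear terms of the `k`-th equation are also multiples
of `E ^ k²` (e.g. `σ₁ σ₂² ∝ E ^ 9`), each equation reduces to a polynomial identity in `t`, `μ` and
the `γᵢ`.
-/

open Complex

theorem HasDerivAt.mul_cexp_const_mul {f : ℂ → ℂ} {f' z : ℂ} (hf : HasDerivAt f f' z) (c : ℂ) :
    HasDerivAt (fun w => f w * cexp (c * w)) ((f' + c * f z) * cexp (c * z)) z := by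
  have hexp : HasDerivAt (fun w => cexp (c * w)) (cexp (c * z) * c) z := by
    simpa using ((hasDerivAt_id z).const_mul c).cexp
  exact (hf.mul hexp).congr_deriv (by ring)

theorem hasDerivAt_cubic (a b c d z : ℂ) :
    HasDerivAt (fun w => a + b * w + c * w ^ 2 + d * w ^ 3) (b + 2 * c * z + 3 * d * z ^ 2) z := by
  have h := ((((hasDerivAt_id' z).const_mul b).const_add a).add
    ((hasDerivAt_pow 2 z).const_mul c)).add ((hasDerivAt_pow 3 z).const_mul d)
  exact h.congr_deriv (by norm_num; ring)

theorem hasDerivAt_ofReal_cubic_mul_cexp (a b c d m : ℂ) (t : ℝ) :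
    HasDerivAt (fun s : ℝ => (a + b * s + c * s ^ 2 + d * s ^ 3) * cexp (m * s))
      ((b + 2 * c * t + 3 * d * t ^ 2 + m * (a + b * t + c * t ^ 2 + d * t ^ 3)) * cexp (m * t))
      t :=
  ((hasDerivAt_cubic a b c d t).mul_cexp_const_mul m).comp_ofReal

theorem cexp_neg_nat_mul_mul (n : ℕ) (μ z : ℂ) : cexp (-n * μ * z) = cexp (-μ * z) ^ n := by
  rw [← exp_nat_mul]
  ring_nf

/-- The explicit formulas solve the triangular conjugated system
`σ₁' = −μσ₁`, `σ₂' = μ(−4σ₂ + σ₁⁴/3)`,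
`σ₃' = μ(−9σ₃ − σ₁σ₂² + (19/24)σ₁⁵σ₂ + (11/81)σ₁⁹)` with data `(γ₁,γ₂,γ₃)` at `t = 0`. -/
theorem stmt_7 (μ γ₁ γ₂ γ₃ : ℂ) (σ₁ σ₂ σ₃ : ℝ → ℂ)
    (h₁ : ∀ t : ℝ, σ₁ t = γ₁ * Complex.exp (-μ * t))
    (h₂ : ∀ t : ℝ, σ₂ t = (γ₂ + (μ * t / 3) * γ₁ ^ 4) * Complex.exp (-4 * μ * t))
    (h₃ : ∀ t : ℝ, σ₃ t =
      (γ₃ - μ * t * γ₁ * γ₂ ^ 2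
        + ((19 * μ * t / 24) - (μ ^ 2 * t ^ 2 / 3)) * γ₁ ^ 5 * γ₂
        + ((11 * μ * t / 81) + (19 * μ ^ 2 * t ^ 2 / 144) - (μ ^ 3 * t ^ 3 / 27)) * γ₁ ^ 9)
        * Complex.exp (-9 * μ * t)) :
    σ₁ 0 = γ₁ ∧ σ₂ 0 = γ₂ ∧ σ₃ 0 = γ₃ ∧
      (∀ t : ℝ, HasDerivAt σ₁ (-μ * σ₁ t) t) ∧
      (∀ t : ℝ, HasDerivAt σ₂ (μ * (-4 * σ₂ t + (1 / 3) * (σ₁ t) ^ 4)) t) ∧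
      (∀ t : ℝ, HasDerivAt σ₃
        (μ * (-9 * σ₃ t - σ₁ t * (σ₂ t) ^ 2 + (19 / 24) * (σ₁ t) ^ 5 * σ₂ t
          + (11 / 81) * (σ₁ t) ^ 9)) t) := by
  have e₄ := cexp_neg_nat_mul_mul 4 μ
  have e₉ := cexp_neg_nat_mul_mul 9 μ
  push_cast at e₄ e₉
  refine ⟨by simp [h₁], by simp [h₂], by simp [h₃], fun t => ?_, fun t => ?_, fun t => ?_⟩
  · convert hasDerivAt_ofReal_cubic_mul_cexp γ₁ 0 0 0 (-μ) t using 1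
    · exact funext fun s => by rw [h₁]; ring
    · rw [h₁]; ring
  · convert hasDerivAt_ofReal_cubic_mul_cexp γ₂ (μ / 3 * γ₁ ^ 4) 0 0 (-4 * μ) t using 1
    · exact funext fun s => by rw [h₂]; ring
    · rw [h₁, h₂, e₄]; ring
  · convert hasDerivAt_ofReal_cubic_mul_cexp γ₃
      (-μ * γ₁ * γ₂ ^ 2 + 19 * μ / 24 * γ₁ ^ 5 * γ₂ + 11 * μ / 81 * γ₁ ^ 9)
      (-μ ^ 2 / 3 * γ₁ ^ 5 * γ₂ + 19 * μ ^ 2 / 144 * γ₁ ^ 9) (-μ ^ 3 / 27 * γ₁ ^ 9) (-9 * μ) t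
      using 1
    · exact funext fun s => by rw [h₃]; ring
    · rw [h₁, h₂, h₃, e₄, e₉]; ring
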